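/- The function σ satisfies: for all x ≥ 1, ∫₀^x σ(t) dt ≥ x / (2 (log₃ x + 1)²), where log₃ denotes the logarithm in base 3. -/

import Mathlib

open Filter Topology

noncomputable section

/-- The defining properties of the function `σ` of Section 3 of the paper:
`σ = −1` on `(−1,0]`, `σ = 1` on `(0,1]`, and for every `n ≥ 0`,
`σ(x) = σ(x + 2·3^n) − 1/(n+1)²` on `(−3^{n+1}, −3^n]` and
`σ(x) = σ(x − 2·3^n) + 1/(n+1)²` on `(3^n, 3^{n+1}]`.
These conditions determine `σ` uniquely on all of `ℝ`. -/
def SigmaSpec (σ : ℝ → ℝ) : Prop :=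
  (∀ x : ℝ, -1 < x → x ≤ 0 → σ x = -1) ∧
  (∀ x : ℝ, 0 < x → x ≤ 1 → σ x = 1) ∧
  (∀ (n : ℕ) (x : ℝ), -(3 : ℝ) ^ (n + 1) < x → x ≤ -(3 : ℝ) ^ n →
    σ x = σ (x + 2 * 3 ^ n) - 1 / ((n : ℝ) + 1) ^ 2) ∧
  (∀ (n : ℕ) (x : ℝ), (3 : ℝ) ^ n < x → x ≤ (3 : ℝ) ^ (n + 1) →
    σ x = σ (x - 2 * 3 ^ n) + 1 / ((n : ℝ) + 1) ^ 2)
namespace SigmaAux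

variable {σ : ℝ → ℝ}

/-- σ is odd away from integers. -/
lemma odd_aux (hσ : SigmaSpec σ) :
    ∀ n : ℕ, ∀ x : ℝ, (¬ ∃ k : ℤ, x = (k : ℝ)) → |x| < 3 ^ n → σ (-x) = -σ x := by
  intro n
  induction n with
  | zero =>
    intro x hx h1
    simp only [pow_zero] at h1
    have hx0 : x ≠ 0 := fun h => hx ⟨0, by simp [h]⟩
    rcases abs_lt.1 h1 with ⟨ha, hb⟩
    rcases lt_or_gt_of_ne hx0 with h | h
    · rw [hσ.1 x ha h.le, hσ.2.1 (-x) (by linarith) (by linarith)]; ring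
    · rw [hσ.2.1 x h hb.le, hσ.1 (-x) (by linarith) (by linarith)]
  | succ n ih =>
    intro x hx h1
    by_cases hsmall : |x| < 3 ^ n
    · exact ih x hx hsmall
    push_neg at hsmall
    have hne : |x| ≠ 3 ^ n := by
      intro h
      rcases abs_eq (by positivity : (0:ℝ) ≤ 3 ^ n) |>.1 h with h' | h'
      · exact hx ⟨3 ^ n, by push_cast [h']; ring⟩
      · exact hx ⟨-(3 ^ n), by push_cast [h']; ring⟩
    have hgt : (3:ℝ) ^ n < |x| := lt_of_le_of_ne hsmall (Ne.symm hne)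
    have h3n : (3:ℝ) ^ (n + 1) = 3 * 3 ^ n := by rw [pow_succ]; ring
    have claim : ∀ z : ℝ, (¬ ∃ k : ℤ, z = (k : ℝ)) → 3 ^ n < z → z < 3 ^ (n + 1) →
        σ (-z) = -σ z := by
      intro z hz h3 h4
      have e1 : σ z = σ (z - 2 * 3 ^ n) + 1 / ((n : ℝ) + 1) ^ 2 := hσ.2.2.2 n z h3 h4.le
      have e2 : σ (-z) = σ (-z + 2 * 3 ^ n) - 1 / ((n : ℝ) + 1) ^ 2 :=
        hσ.2.2.1 n (-z) (by linarith) (by linarith)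
      have hz' : ¬ ∃ k : ℤ, z - 2 * 3 ^ n = (k : ℝ) := by
        rintro ⟨k, hk⟩
        exact hz ⟨k + 2 * 3 ^ n, by push_cast; linarith⟩
      have habs : |z - 2 * 3 ^ n| < 3 ^ n := abs_lt.2 ⟨by linarith, by linarith⟩
      have hih := ih (z - 2 * 3 ^ n) hz' habs
      have hrw : σ (-z + 2 * 3 ^ n) = -σ (z - 2 * 3 ^ n) := by
        rw [show -z + 2 * 3 ^ n = -(z - 2 * 3 ^ n) by ring]; exact hih
      rw [e1, e2, hrw]; ring
    rcases abs_lt.1 h1 with ⟨hlo, hhi⟩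
    rcases lt_or_gt_of_ne (fun h : x = 0 => hx ⟨0, by simp [h]⟩) with h | h
    · -- x < 0 : apply claim to -x
      have hx' : ¬ ∃ k : ℤ, -x = (k : ℝ) := by
        rintro ⟨k, hk⟩; exact hx ⟨-k, by push_cast; linarith⟩
      have h3 : (3:ℝ) ^ n < -x := by rwa [abs_of_neg h] at hgt
      have := claim (-x) hx' h3 (by linarith)
      rw [neg_neg] at this; linarith
    · have h3 : (3:ℝ) ^ n < x := by rwa [abs_of_pos h] at hgt
      exact claim x hx h3 hhi

lemma odd_ae (hσ : SigmaSpec σ) : ∀ᵐ x : ℝ, σ (-x) = -σ x := by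
  have hS : MeasureTheory.volume (Set.range ((↑) : ℤ → ℝ)) = 0 :=
    Set.Countable.measure_zero (Set.countable_range _) _
  rw [MeasureTheory.ae_iff]
  refine MeasureTheory.measure_mono_null ?_ hS
  intro x hx
  by_contra hxS
  apply hx
  obtain ⟨n, hn⟩ := pow_unbounded_of_one_lt |x| (by norm_num : (1:ℝ) < 3)
  exact odd_aux hσ n x (fun ⟨k, hk⟩ => hxS ⟨k, hk.symm⟩) hn

/-- Interval integrability on symmetric intervals. -/
lemma integrable_sym (hσ : SigmaSpec σ) :
    ∀ n : ℕ, IntervalIntegrable σ MeasureTheory.volume (-(3:ℝ) ^ n) (3 ^ n) := by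
  intro n
  induction n with
  | zero =>
    simp only [pow_zero]
    have h1 : IntervalIntegrable σ MeasureTheory.volume (-1) 0 := by
      rw [intervalIntegrable_iff_integrableOn_Ioc_of_le (by norm_num)]
      exact (MeasureTheory.integrableOn_const measure_Ioc_lt_top.ne).congr_fun
        (fun x hx => (hσ.1 x hx.1 hx.2).symm) measurableSet_Ioc
    have h2 : IntervalIntegrable σ MeasureTheory.volume 0 1 := by
      rw [intervalIntegrable_iff_integrableOn_Ioc_of_le (by norm_num)]
      exact (MeasureTheory.integrableOn_const measure_Ioc_lt_top.ne).congr_fun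
        (fun x hx => (hσ.2.1 x hx.1 hx.2).symm) measurableSet_Ioc
    exact h1.trans h2
  | succ n ih =>
    have h3n : (3:ℝ) ^ (n + 1) = 3 * 3 ^ n := by rw [pow_succ]; ring
    have hpos : (0:ℝ) < 3 ^ n := by positivity
    -- left piece
    have hL : IntervalIntegrable σ MeasureTheory.volume (-(3:ℝ) ^ (n+1)) (-(3:ℝ) ^ n) := by
      have h1 := (ih.comp_add_right (2 * 3 ^ n)).sub
        (intervalIntegrable_const (c := 1 / ((n : ℝ) + 1) ^ 2))
      have e1 : -(3:ℝ) ^ n - 2 * 3 ^ n = -(3:ℝ) ^ (n+1) := by rw [h3n]; ring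
      have e2 : (3:ℝ) ^ n - 2 * 3 ^ n = -(3:ℝ) ^ n := by ring
      rw [e1, e2] at h1
      rw [intervalIntegrable_iff_integrableOn_Ioc_of_le (by nlinarith)] at h1 ⊢
      exact h1.congr_fun (fun x hx => (hσ.2.2.1 n x hx.1 hx.2).symm) measurableSet_Ioc
    have hR : IntervalIntegrable σ MeasureTheory.volume ((3:ℝ) ^ n) (3 ^ (n+1)) := by
      have h1 := (ih.comp_sub_right (2 * 3 ^ n)).add
        (intervalIntegrable_const (c := 1 / ((n : ℝ) + 1) ^ 2))
      have e1 : -(3:ℝ) ^ n + 2 * 3 ^ n = (3:ℝ) ^ n := by ring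
      have e2 : (3:ℝ) ^ n + 2 * 3 ^ n = (3:ℝ) ^ (n+1) := by rw [h3n]; ring
      rw [e1, e2] at h1
      rw [intervalIntegrable_iff_integrableOn_Ioc_of_le (by nlinarith)] at h1 ⊢
      exact h1.congr_fun (fun x hx => (hσ.2.2.2 n x hx.1 hx.2).symm) measurableSet_Ioc
    exact (hL.trans ih).trans hR

lemma integrable_all (hσ : SigmaSpec σ) (a b : ℝ) :
    IntervalIntegrable σ MeasureTheory.volume a b := by
  obtain ⟨n, hn⟩ := pow_unbounded_of_one_lt (|a| ⊔ |b|) (by norm_num : (1:ℝ) < 3)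
  have ha : |a| < 3 ^ n := lt_of_le_of_lt le_sup_left hn
  have hb : |b| < 3 ^ n := lt_of_le_of_lt le_sup_right hn
  have hp3 : (0:ℝ) < 3 ^ n := by positivity
  refine (integrable_sym hσ n).mono_set (Set.uIcc_subset_uIcc ?_ ?_) <;>
    rw [Set.uIcc_of_le (by linarith : -(3:ℝ)^n ≤ 3^n)] <;> constructor
  · linarith [abs_lt.1 ha |>.1]
  · linarith [abs_lt.1 ha |>.2]
  · linarith [abs_lt.1 hb |>.1]
  · linarith [abs_lt.1 hb |>.2]

def F (σ : ℝ → ℝ) (y : ℝ) : ℝ := ∫ t in (0:ℝ)..y, σ t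

lemma int_neg_left (hσ : SigmaSpec σ) (a : ℝ) :
    ∫ x in (-a)..(0:ℝ), σ x = -(F σ a) := by
  have h1 : ∫ x in (0:ℝ)..a, σ (-x) = ∫ x in (-a)..(0:ℝ), σ x := by
    simpa using intervalIntegral.integral_comp_neg (a := 0) (b := a) σ
  have h2 : ∫ x in (0:ℝ)..a, σ (-x) = ∫ x in (0:ℝ)..a, -σ x :=
    intervalIntegral.integral_congr_ae ((odd_ae hσ).mono (fun x hx _ => hx))
  rw [← h1, h2, intervalIntegral.integral_neg]; rfl

lemma F_neg (hσ : SigmaSpec σ) (y : ℝ) : F σ (-y) = F σ y := by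
  have := int_neg_left hσ y
  rw [F, intervalIntegral.integral_symm, this, neg_neg]

lemma F_abs (hσ : SigmaSpec σ) (y : ℝ) : F σ y = F σ |y| := by
  rcases le_or_gt 0 y with h | h
  · rw [abs_of_nonneg h]
  · rw [abs_of_neg h]; exact (F_neg hσ y).symm

lemma F_base (hσ : SigmaSpec σ) (y : ℝ) (h0 : 0 ≤ y) (h1 : y ≤ 1) : F σ y = y := by
  rw [F]
  have : ∫ t in (0:ℝ)..y, σ t = ∫ t in (0:ℝ)..y, (1:ℝ) := by
    refine intervalIntegral.integral_congr_ae (MeasureTheory.ae_of_all _ (fun x hx => ?_))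
    rw [Set.uIoc_of_le h0] at hx
    exact hσ.2.1 x hx.1 (hx.2.trans h1)
  rw [this]; simp

lemma F_rec (hσ : SigmaSpec σ) (n : ℕ) (y : ℝ) (h1 : (3:ℝ) ^ n < y) (h2 : y ≤ 3 ^ (n+1)) :
    F σ y = F σ |y - 2 * 3 ^ n| + (y - 3 ^ n) * (1 / ((n : ℝ) + 1) ^ 2) := by
  have hpos : (0:ℝ) < 3 ^ n := by positivity
  have hsplit : F σ (3 ^ n) + ∫ t in (3:ℝ) ^ n..y, σ t = F σ y :=
    intervalIntegral.integral_add_adjacent_intervals (integrable_all hσ _ _) (integrable_all hσ _ _)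
  have step1 : ∫ t in (3:ℝ) ^ n..y, σ t
      = ∫ t in (3:ℝ) ^ n..y, (σ (t - 2 * 3 ^ n) + 1 / ((n : ℝ) + 1) ^ 2) := by
    refine intervalIntegral.integral_congr_ae (MeasureTheory.ae_of_all _ (fun x hx => ?_))
    rw [Set.uIoc_of_le h1.le] at hx
    exact hσ.2.2.2 n x hx.1 (hx.2.trans h2)
  have hint : IntervalIntegrable (fun t => σ (t - 2 * 3 ^ n)) MeasureTheory.volume
      ((3:ℝ) ^ n) y := by
    have h := (integrable_all hσ (-(3:ℝ)^n) (y - 2 * 3 ^ n)).comp_sub_right (2 * 3 ^ n)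
    have e1 : -(3:ℝ) ^ n + 2 * 3 ^ n = (3:ℝ) ^ n := by ring
    have e2 : y - 2 * 3 ^ n + 2 * 3 ^ n = y := by ring
    rwa [e1, e2] at h
  have step2 : ∫ t in (3:ℝ) ^ n..y, (σ (t - 2 * 3 ^ n) + 1 / ((n : ℝ) + 1) ^ 2)
      = (∫ t in (3:ℝ) ^ n..y, σ (t - 2 * 3 ^ n)) + (y - 3 ^ n) * (1 / ((n : ℝ) + 1) ^ 2) := by
    rw [intervalIntegral.integral_add hint (intervalIntegrable_const),
      intervalIntegral.integral_const, smul_eq_mul]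
  have step3 : ∫ t in (3:ℝ) ^ n..y, σ (t - 2 * 3 ^ n)
      = ∫ s in (-(3:ℝ) ^ n)..(y - 2 * 3 ^ n), σ s := by
    rw [intervalIntegral.integral_comp_sub_right σ (2 * 3 ^ n)]
    norm_num
    congr 1 <;> ring
  have step4 : (∫ s in (-(3:ℝ) ^ n)..(0:ℝ), σ s) + F σ (y - 2 * 3 ^ n)
      = ∫ s in (-(3:ℝ) ^ n)..(y - 2 * 3 ^ n), σ s :=
    intervalIntegral.integral_add_adjacent_intervals (integrable_all hσ _ _) (integrable_all hσ _ _)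
  have step5 := int_neg_left hσ (3 ^ n)
  have step6 := F_abs hσ (y - 2 * 3 ^ n)
  linarith [hsplit, step1, step2, step3, step4, step5, step6]

lemma key (hσ : SigmaSpec σ) :
    ∀ n : ℕ, ∀ y : ℝ, 0 ≤ y → y ≤ 3 ^ (n+1) → y / (2 * ((n : ℝ) + 1) ^ 2) ≤ F σ y := by
  intro n
  induction n with
  | zero =>
    intro y h0 h3
    norm_num
    norm_num at h3
    by_cases h1 : y ≤ 1
    · rw [F_base hσ y h0 h1]; linarith
    push_neg at h1
    have hrec := F_rec hσ 0 y (by norm_num; exact h1) (by norm_num; exact h3)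
    norm_num at hrec
    have habs : |y - 2| ≤ 1 := abs_le.2 ⟨by linarith, by linarith⟩
    rw [F_base hσ _ (abs_nonneg _) habs] at hrec
    rcases le_total y 2 with h | h
    · rw [abs_of_nonpos (by linarith)] at hrec; linarith
    · rw [abs_of_nonneg (by linarith)] at hrec; linarith
  | succ n ih =>
    intro y h0 h3
    have h3n : (3:ℝ) ^ (n + 1 + 1) = 3 * 3 ^ (n+1) := by rw [pow_succ]; ring
    have hn0 : (0:ℝ) ≤ (n:ℝ) := Nat.cast_nonneg n
    have hpos : (0:ℝ) < 3 ^ (n+1) := by positivity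
    have hcast : ((n:ℝ) + 1 + 1) = (n:ℝ) + 2 := by ring
    by_cases h1 : y ≤ 3 ^ (n+1)
    · have := ih y h0 h1
      have hn0 : (0:ℝ) ≤ (n:ℝ) := Nat.cast_nonneg n
      have hmono : y / (2 * ((n : ℝ) + 1 + 1) ^ 2) ≤ y / (2 * ((n : ℝ) + 1) ^ 2) := by
        gcongr
        all_goals nlinarith
      push_cast
      push_cast at this hmono
      linarith
    push_neg at h1
    have hrec := F_rec hσ (n+1) y h1 h3
    set z := |y - 2 * 3 ^ (n+1)| with hz
    have hz0 : 0 ≤ z := abs_nonneg _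
    have hz3 : z ≤ 3 ^ (n+1) := by
      rw [hz]
      rw [h3n] at h3
      exact abs_le.2 ⟨by linarith, by linarith⟩
    have hihz := ih z hz0 hz3
    have hzl : 2 * 3 ^ (n+1) - y ≤ z := by
      have := neg_abs_le (y - 2 * 3 ^ (n+1)); rw [← hz] at this; linarith
    -- weaken denominator
    have hmono : z / (2 * ((n : ℝ) + 2) ^ 2) ≤ z / (2 * ((n : ℝ) + 1) ^ 2) := by
      gcongr
      all_goals nlinarith
    have hlow : (2 * 3 ^ (n+1) - y) / (2 * ((n : ℝ) + 2) ^ 2) ≤ z / (2 * ((n : ℝ) + 2) ^ 2) := by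
      gcongr
    have hD : (0:ℝ) < ((n:ℝ) + 2) ^ 2 := by positivity
    have e : (2 * 3 ^ (n+1) - y) / (2 * ((n : ℝ) + 2) ^ 2)
        + (y - 3 ^ (n+1)) * (1 / ((n : ℝ) + 2) ^ 2) = y / (2 * ((n : ℝ) + 2) ^ 2) := by
      field_simp; ring
    push_cast at hrec ⊢
    rw [show ((n:ℝ) + 1 + 1) = (n:ℝ) + 2 by ring] at hrec ⊢
    linarith [hihz, hmono, hlow, hrec, e]

end SigmaAux

/-- **Proposition 3.3.**  The function `σ` satisfies
`∫₀^x σ(t) dt ≥ x / (2 (log₃ x + 1)²)` for all `x ≥ 1`. -/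
theorem sigma_integral_lower_bound (σ : ℝ → ℝ) (hσ : SigmaSpec σ) :
    ∀ x : ℝ, 1 ≤ x →
      x / (2 * (Real.logb 3 x + 1) ^ 2) ≤ ∫ t in (0 : ℝ)..x, σ t := by
  intro x hx
  have hx0 : (0:ℝ) < x := by linarith
  set n := ⌊Real.logb 3 x⌋₊ with hn
  have hlog0 : 0 ≤ Real.logb 3 x := Real.logb_nonneg (by norm_num) hx
  have hfl : (n : ℝ) ≤ Real.logb 3 x := Nat.floor_le hlog0
  have hfl2 : Real.logb 3 x < (n : ℝ) + 1 := Nat.lt_floor_add_one _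
  have hx3 : x ≤ (3:ℝ) ^ (n + 1) := by
    have h1 : x < (3:ℝ) ^ (((n:ℝ) + 1) : ℝ) := by
      rw [← Real.rpow_logb (by norm_num : (0:ℝ) < 3) (by norm_num) hx0]
      exact (Real.rpow_lt_rpow_left_iff (by norm_num : (1:ℝ) < 3)).2 hfl2
    have h2 : (3:ℝ) ^ (((n:ℝ) + 1) : ℝ) = (3:ℝ) ^ (n + 1) := by
      rw [show ((n:ℝ) + 1) = ((n + 1 : ℕ) : ℝ) by push_cast; ring, Real.rpow_natCast]
    linarith [h2 ▸ h1]
  have hkey := SigmaAux.key hσ n x (le_of_lt hx0) hx3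
  have hmono : x / (2 * (Real.logb 3 x + 1) ^ 2) ≤ x / (2 * ((n : ℝ) + 1) ^ 2) := by
    have hn0 : (0:ℝ) ≤ (n:ℝ) := Nat.cast_nonneg n
    gcongr
    all_goals nlinarith
  exact le_trans hmono hkey
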